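/- Among all symmetric probability densities K on ℝ with finite second moment, the functional J(K) = k₂(K)^{2/5} R(K)^{4/5}, where k₂(K) = ∫ u² K(u) du and R(K) = ∫ K(u)² du, is minimised by the Epanechnikov kernel K*(x) = (3/4)(1 − x²) 1{|x| ≤ 1} (up to rescaling K_a(u) = a⁻¹K(u/a), under which J is invariant). -/

import Mathlib

open MeasureTheory

/-- The Epanechnikov kernel (3/4)(1 − x²) on [−1, 1]. -/
noncomputable def epanechnikov (x : ℝ) : ℝ :=
  if |x| ≤ 1 then (3 / 4) * (1 - x ^ 2) else 0

/-- The criterion J(K) = k₂(K)^{2/5} R(K)^{4/5}. -/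
noncomputable def kernelCriterion (K : ℝ → ℝ) : ℝ :=
  (∫ u, u ^ 2 * K u) ^ ((2 : ℝ) / 5) * (∫ u, (K u) ^ 2) ^ ((4 : ℝ) / 5)

/-!
Compare `K` with the rescaled Epanechnikov kernel `f = b⁻¹ K*(·/b)`. Expanding `∫ (K - f)² ≥ 0`
gives `R(K) ≥ 2 ∫ f K - R(f)`, where `R(f) = 3/(5b)` and, since `K*(x) ≥ (3/4)(1 - x²)` on all
of `ℝ`, `∫ f K ≥ (3/(4b)) (1 - k₂(K)/b²)`. With `b² = 5 k₂(K)` this reads `R(K) ≥ 3/(5b)`,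
that is `k₂(K) R(K)² ≥ 9/125 = k₂(K*) R(K*)²`, and `J(K) = (k₂(K) R(K)²)^{2/5}`.
-/

theorem two_mul_integral_mul_sub_integral_sq_le {α : Type*} [MeasurableSpace α] {μ : Measure α}
    {f g : α → ℝ} (hf : Integrable (fun x => f x ^ 2) μ) (hg : Integrable (fun x => g x ^ 2) μ)
    (hfg : Integrable (fun x => f x * g x) μ) :
    2 * ∫ x, f x * g x ∂μ - ∫ x, f x ^ 2 ∂μ ≤ ∫ x, g x ^ 2 ∂μ := by
  have h : 0 ≤ ∫ x, (g x - f x) ^ 2 ∂μ := integral_nonneg fun x => sq_nonneg _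
  have hexpand : ∀ x, (g x - f x) ^ 2 = g x ^ 2 - 2 * (f x * g x) + f x ^ 2 := fun x => by ring
  have hdiff : Integrable (fun x => g x ^ 2 - 2 * (f x * g x)) μ := hg.sub (hfg.const_mul 2)
  simp_rw [hexpand] at h
  rw [integral_add hdiff hf, integral_sub hg (hfg.const_mul 2), integral_const_mul] at h
  linarith

theorem integral_sq_mul_pos {K : ℝ → ℝ} (hK : ∀ u, 0 ≤ K u) (hK0 : ∫ u, K u ≠ 0)
    (hk2 : Integrable fun u => u ^ 2 * K u) : 0 < ∫ u, u ^ 2 * K u := by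
  have hnonneg : ∀ u, 0 ≤ u ^ 2 * K u := fun u => mul_nonneg (sq_nonneg u) (hK u)
  refine (integral_nonneg hnonneg).lt_of_ne' fun h => hK0 <| integral_eq_zero_of_ae ?_
  filter_upwards [(integral_eq_zero_iff_of_nonneg hnonneg hk2).1 h, volume.ae_ne 0] with u hu h0
  simpa [h0] using hu

theorem epanechnikov_eq_max (x : ℝ) : epanechnikov x = max (3 / 4 * (1 - x ^ 2)) 0 := by
  unfold epanechnikov
  split_ifs with hx
  · rw [max_eq_left]
    nlinarith [(sq_le_one_iff_abs_le_one x).2 hx]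
  · rw [max_eq_right]
    nlinarith [(sq_le_one_iff_abs_le_one x).not.2 hx]

theorem continuous_epanechnikov : Continuous epanechnikov := by
  simp_rw [funext epanechnikov_eq_max]
  fun_prop

theorem epanechnikov_nonneg (x : ℝ) : 0 ≤ epanechnikov x :=
  epanechnikov_eq_max x ▸ le_max_right _ _

theorem le_epanechnikov (x : ℝ) : 3 / 4 * (1 - x ^ 2) ≤ epanechnikov x :=
  epanechnikov_eq_max x ▸ le_max_left _ _

theorem epanechnikov_le (x : ℝ) : epanechnikov x ≤ 3 / 4 := by
  rw [epanechnikov_eq_max]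
  exact max_le (by nlinarith [sq_nonneg x]) (by norm_num)

theorem integral_epanechnikov_eq_intervalIntegral (F : ℝ → ℝ → ℝ) (hF : ∀ u, F u 0 = 0) :
    ∫ u, F u (epanechnikov u) = ∫ u in (-1)..1, F u (3 / 4 * (1 - u ^ 2)) := by
  rw [intervalIntegral.integral_of_le (by norm_num), ← integral_Icc_eq_integral_Ioc,
    ← setIntegral_eq_integral_of_forall_compl_eq_zero]
  · refine setIntegral_congr_fun measurableSet_Icc fun u hu => ?_
    simp [epanechnikov, abs_le.2 hu]
  · intro u hu
    rw [Set.mem_Icc] at hu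
    simp [epanechnikov, abs_le, hu, hF]

theorem integral_sq_mul_epanechnikov : ∫ u, u ^ 2 * epanechnikov u = 1 / 5 := by
  rw [integral_epanechnikov_eq_intervalIntegral (fun u y => u ^ 2 * y) (by simp)]
  have hexpand : ∀ u : ℝ, u ^ 2 * (3 / 4 * (1 - u ^ 2)) = 3 / 4 * u ^ 2 - 3 / 4 * u ^ 4 :=
    fun u => by ring
  simp_rw [hexpand]
  rw [intervalIntegral.integral_sub ((by fun_prop : Continuous _).intervalIntegrable _ _)
    ((by fun_prop : Continuous _).intervalIntegrable _ _)]
  simp [integral_pow]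
  norm_num

theorem integral_epanechnikov_sq : ∫ u, epanechnikov u ^ 2 = 3 / 5 := by
  rw [integral_epanechnikov_eq_intervalIntegral (fun _ y => y ^ 2) (by simp)]
  have hexpand : ∀ u : ℝ, (3 / 4 * (1 - u ^ 2)) ^ 2 = 9 / 16 - 9 / 8 * u ^ 2 + 9 / 16 * u ^ 4 :=
    fun u => by ring
  simp_rw [hexpand]
  rw [intervalIntegral.integral_add ((by fun_prop : Continuous _).intervalIntegrable _ _)
      ((by fun_prop : Continuous _).intervalIntegrable _ _),
    intervalIntegral.integral_sub ((by fun_prop : Continuous _).intervalIntegrable _ _)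
      ((by fun_prop : Continuous _).intervalIntegrable _ _)]
  simp [integral_pow]
  norm_num

theorem integrable_epanechnikov_sq : Integrable fun u => epanechnikov u ^ 2 :=
  (continuous_epanechnikov.pow 2).integrable_of_hasCompactSupport <|
    HasCompactSupport.intro (isCompact_Icc (a := -1) (b := 1)) fun x hx => by
      simp [epanechnikov, abs_le, Set.mem_Icc.not.1 hx]

theorem integral_sq_inv_mul_epanechnikov_div {b : ℝ} (hb : 0 < b) :
    ∫ u, (b⁻¹ * epanechnikov (u / b)) ^ 2 = 3 / (5 * b) := by
  simp_rw [mul_pow]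
  rw [integral_const_mul, Measure.integral_comp_div (fun u => epanechnikov u ^ 2),
    integral_epanechnikov_sq, abs_of_pos hb, smul_eq_mul]
  field_simp

theorem integral_sq_ge_of_second_moment {K : ℝ → ℝ} (hK : ∀ u, 0 ≤ K u)
    (hKint : Integrable K) (hKprob : ∫ u, K u = 1) (hk2 : Integrable fun u => u ^ 2 * K u)
    (hR : Integrable fun u => K u ^ 2) {b : ℝ} (hb : 0 < b) :
    3 / (2 * b) * (1 - (∫ u, u ^ 2 * K u) / b ^ 2) - 3 / (5 * b) ≤ ∫ u, K u ^ 2 := by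
  set f : ℝ → ℝ := fun u => b⁻¹ * epanechnikov (u / b)
  have hf2 : Integrable fun u => f u ^ 2 := by
    simp_rw [f, mul_pow]
    exact (integrable_epanechnikov_sq.comp_div hb.ne').const_mul _
  have hfK : Integrable fun u => f u * K u := by
    refine hKint.bdd_mul (c := b⁻¹ * (3 / 4)) ?_ (.of_forall fun u => ?_)
    · exact ((continuous_epanechnikov.comp (continuous_id.div_const b)).const_mul _)
        |>.aestronglyMeasurable
    · rw [Real.norm_eq_abs, abs_of_nonneg (mul_nonneg (by positivity) (epanechnikov_nonneg _))]
      exact mul_le_mul_of_nonneg_left (epanechnikov_le _) (by positivity)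
  have hmean : 3 / (4 * b) * (1 - (∫ u, u ^ 2 * K u) / b ^ 2) ≤ ∫ u, f u * K u := calc
    _ = ∫ u, 3 / (4 * b) * K u - 3 / (4 * b ^ 3) * (u ^ 2 * K u) := by
      rw [integral_sub (hKint.const_mul _) (hk2.const_mul _), integral_const_mul,
        integral_const_mul, hKprob]
      field_simp
    _ ≤ ∫ u, f u * K u := by
      refine integral_mono ((hKint.const_mul _).sub (hk2.const_mul _)) hfK fun u => ?_
      calc 3 / (4 * b) * K u - 3 / (4 * b ^ 3) * (u ^ 2 * K u)
          = b⁻¹ * (3 / 4 * (1 - (u / b) ^ 2)) * K u := by field_simp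
        _ ≤ b⁻¹ * epanechnikov (u / b) * K u :=
          mul_le_mul_of_nonneg_right
            (mul_le_mul_of_nonneg_left (le_epanechnikov _) (by positivity)) (hK u)
  have hcross := two_mul_integral_mul_sub_integral_sq_le hf2 hR hfK
  rw [integral_sq_inv_mul_epanechnikov_div hb] at hcross
  rw [show 3 / (2 * b) = 2 * (3 / (4 * b)) by ring, mul_assoc]
  linarith

theorem kernelCriterion_eq_rpow {K : ℝ → ℝ} (hK : ∀ u, 0 ≤ K u) :
    kernelCriterion K = ((∫ u, u ^ 2 * K u) * (∫ u, K u ^ 2) ^ 2) ^ ((2 : ℝ) / 5) := by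
  have hk2 : 0 ≤ ∫ u, u ^ 2 * K u := integral_nonneg fun u => mul_nonneg (sq_nonneg u) (hK u)
  have hR : 0 ≤ ∫ u, K u ^ 2 := integral_nonneg fun u => sq_nonneg _
  rw [kernelCriterion, Real.mul_rpow hk2 (by positivity), ← Real.rpow_natCast,
    ← Real.rpow_mul hR]
  norm_num

theorem epanechnikov_minimises_criterion_general
    (K : ℝ → ℝ)
    (hKnonneg : ∀ u, 0 ≤ K u)
    (hKint : Integrable K)
    (hKprob : ∫ u, K u = 1)
    (hk2 : Integrable (fun u => u ^ 2 * K u))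
    (hR : Integrable (fun u => (K u) ^ 2)) :
    kernelCriterion epanechnikov ≤ kernelCriterion K := by
  set μ := ∫ u, u ^ 2 * K u
  set R := ∫ u, K u ^ 2
  have hμ : 0 < μ := integral_sq_mul_pos hKnonneg (hKprob ▸ one_ne_zero) hk2
  set b := √(5 * μ)
  have hb : 0 < b := Real.sqrt_pos.2 (by positivity)
  have hb2 : b ^ 2 = 5 * μ := Real.sq_sqrt (by positivity)
  have hRb : 3 / (5 * b) ≤ R := by
    have h := integral_sq_ge_of_second_moment hKnonneg hKint hKprob hk2 hR hb
    rwa [hb2, show 3 / (2 * b) * (1 - μ / (5 * μ)) - 3 / (5 * b) = 3 / (5 * b) by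
      field_simp; ring] at h
  have hμR : 9 / 125 ≤ μ * R ^ 2 := calc
    9 / 125 = μ * (3 / (5 * b)) ^ 2 := by field_simp; rw [hb2]; ring
    _ ≤ μ * R ^ 2 := by gcongr
  rw [kernelCriterion_eq_rpow epanechnikov_nonneg, kernelCriterion_eq_rpow hKnonneg,
    integral_sq_mul_epanechnikov, integral_epanechnikov_sq]
  exact Real.rpow_le_rpow (by positivity) (by norm_num; exact hμR) (by norm_num)

/-- among all symmetric probability densities with finite second
moment (and finite R(K)), the functional J(K) = k₂(K)^{2/5} R(K)^{4/5} is
minimised by the Epanechnikov kernel. -/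
theorem epanechnikov_minimises_criterion
    (K : ℝ → ℝ)
    (hKnonneg : ∀ u, 0 ≤ K u)
    (hKsymm : ∀ u, K (-u) = K u)
    (hKint : Integrable K)
    (hKprob : ∫ u, K u = 1)
    (hk2 : Integrable (fun u => u ^ 2 * K u))
    (hR : Integrable (fun u => (K u) ^ 2)) :
    kernelCriterion epanechnikov ≤ kernelCriterion K :=
  epanechnikov_minimises_criterion_general K hKnonneg hKint hKprob hk2 hR
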